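/- arXiv:1001.1960 — 2 statements merged into one kernel-verified Lean document; each statement's English description precedes it below -/
import Mathlib

section
/- Let n p : ℕ, let A : Matrix (Fin n) (Fin n) ℕ satisfy A i j ≤ 1 for all i j (a 0/1 adjacency matrix), and let s t : Fin n with s ≠ t. Define the layered vertex type V' := (Fin n × Fin (p+1)) ⊕ Bool, writing s' := Sum.inr false and t' := Sum.inr true, and define B : Matrix V' V' ℕ by: B s' (Sum.inl (v,ℓ)) = 1 if v = s and ℓ = 0, else 0; B (Sum.inl (v,ℓ)) t' = 1 if v = t, else 0; B t' t' = 1; B (Sum.inl (v,ℓ)) (Sum.inl (v',ℓ')) = A v v' if (ℓ' : ℕ) = (ℓ : ℕ) + 1, else 0; and B u w = 0 for all other pairs (u,w). Then (B ^ (p+2)) s' t' = ∑_{k ∈ Finset.Icc 1 p} (A ^ k) s t; that is, the number of walks of length exactly p+2 from s' to t' in the layered graph equals the number of walks of length at most p from s to t in the original graph. -/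
/-- The adjacency matrix of the layered graph built from a graph with 0/1
adjacency matrix `A`, distinguished vertices `s`, `t`, and path-length bound `p`.
Vertices are pairs (original vertex, layer) together with two extra vertices
`s' := Sum.inr false` and `t' := Sum.inr true`. -/
def layeredB (n p : ℕ) (A : Matrix (Fin n) (Fin n) ℕ) (s t : Fin n) :
    Matrix ((Fin n × Fin (p + 1)) ⊕ Bool) ((Fin n × Fin (p + 1)) ⊕ Bool) ℕ :=
  Matrix.of fun u w =>
    match u, w with
    | Sum.inr false, Sum.inl (v, ℓ) => if v = s ∧ ℓ = 0 then 1 else 0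
    | Sum.inl (v, _), Sum.inr true => if v = t then 1 else 0
    | Sum.inr true, Sum.inr true => 1
    | Sum.inl (v, ℓ), Sum.inl (v', ℓ') => if (ℓ' : ℕ) = (ℓ : ℕ) + 1 then A v v' else 0
    | _, _ => 0

section Aux
variable {n p : ℕ} (A : Matrix (Fin n) (Fin n) ℕ) (s t : Fin n)

lemma layeredB_tt : layeredB n p A s t (Sum.inr true) (Sum.inr true) = 1 := rfl
lemma layeredB_tf : layeredB n p A s t (Sum.inr true) (Sum.inr false) = 0 := rfl
lemma layeredB_t_inl (x : Fin n × Fin (p+1)) :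
    layeredB n p A s t (Sum.inr true) (Sum.inl x) = 0 := by
  obtain ⟨v, ℓ⟩ := x; rfl
lemma layeredB_inl_t (v : Fin n) (ℓ : Fin (p+1)) :
    layeredB n p A s t (Sum.inl (v, ℓ)) (Sum.inr true) = if v = t then 1 else 0 := rfl
lemma layeredB_inl_f (v : Fin n) (ℓ : Fin (p+1)) :
    layeredB n p A s t (Sum.inl (v, ℓ)) (Sum.inr false) = 0 := rfl
lemma layeredB_inl_inl (v v' : Fin n) (ℓ ℓ' : Fin (p+1)) :
    layeredB n p A s t (Sum.inl (v, ℓ)) (Sum.inl (v', ℓ')) =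
      if (ℓ' : ℕ) = (ℓ : ℕ) + 1 then A v v' else 0 := rfl
lemma layeredB_s_inl (v : Fin n) (ℓ : Fin (p+1)) :
    layeredB n p A s t (Sum.inr false) (Sum.inl (v, ℓ)) =
      if v = s ∧ ℓ = 0 then 1 else 0 := rfl
lemma layeredB_ss : layeredB n p A s t (Sum.inr false) (Sum.inr false) = 0 := rfl
lemma layeredB_st : layeredB n p A s t (Sum.inr false) (Sum.inr true) = 0 := rfl

lemma layeredB_pow_tt (m : ℕ) :
    (layeredB n p A s t ^ m) (Sum.inr true) (Sum.inr true) = 1 := by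
  induction m with
  | zero => simp [Matrix.one_apply]
  | succ m ih =>
    rw [pow_succ', Matrix.mul_apply, Fintype.sum_sum_type, Fintype.sum_bool]
    simp [layeredB_tt, layeredB_tf, layeredB_t_inl, ih]

lemma layeredB_pow_inl (m : ℕ) : ∀ (ℓ : ℕ) (hℓ : ℓ ≤ p) (v : Fin n),
    (layeredB n p A s t ^ m) (Sum.inl (v, ⟨ℓ, Nat.lt_succ_of_le hℓ⟩)) (Sum.inr true)
      = ∑ j ∈ Finset.range (min m (p + 1 - ℓ)), (A ^ j) v t := by
  induction m with
  | zero => intro ℓ hℓ v; simp [Matrix.one_apply]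
  | succ m ih =>
    intro ℓ hℓ v
    rw [pow_succ', Matrix.mul_apply, Fintype.sum_sum_type, Fintype.sum_bool,
      Fintype.sum_prod_type]
    have htt := layeredB_pow_tt (p := p) A s t m
    rcases Nat.lt_or_ge ℓ p with hlp | hlp
    · -- ℓ < p
      have key : ∀ v' : Fin n,
          ∑ ℓ' : Fin (p+1), (layeredB n p A s t) (Sum.inl (v, ⟨ℓ, Nat.lt_succ_of_le hℓ⟩)) (Sum.inl (v', ℓ')) *
            (layeredB n p A s t ^ m) (Sum.inl (v', ℓ')) (Sum.inr true)
          = A v v' * ∑ j ∈ Finset.range (min m (p - ℓ)), (A ^ j) v' t := by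
        intro v'
        rw [Finset.sum_eq_single (⟨ℓ+1, by omega⟩ : Fin (p+1))]
        · rw [layeredB_inl_inl, ih (ℓ+1) (by omega) v']
          simp only [Fin.val_mk, if_pos rfl, if_true]
          have hsub : p + 1 - (ℓ + 1) = p - ℓ := by omega
          rw [hsub]
        · intro ℓ' _ hne
          have : (ℓ' : ℕ) ≠ ℓ + 1 := by
            intro h; apply hne; apply Fin.ext; simpa using h
          rw [layeredB_inl_inl, if_neg this, zero_mul]
        · intro h; exact absurd (Finset.mem_univ _) h
      rw [Finset.sum_congr rfl (fun v' _ => key v')]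
      simp only [layeredB_inl_t, layeredB_inl_f, htt, zero_mul, mul_one, zero_add]
      have hms : ∀ v', A v v' * ∑ j ∈ Finset.range (min m (p - ℓ)), (A ^ j) v' t
          = ∑ j ∈ Finset.range (min m (p - ℓ)), A v v' * (A ^ j) v' t := by
        intro v'; rw [Finset.mul_sum]
      rw [Finset.sum_congr rfl (fun v' _ => hms v'), Finset.sum_comm]
      have hpow : ∀ j : ℕ, ∑ v', A v v' * (A ^ j) v' t = (A ^ (j+1)) v t := by
        intro j; rw [pow_succ', Matrix.mul_apply]
      rw [Finset.sum_congr rfl (fun j _ => hpow j)]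
      have hmin : min (m+1) (p + 1 - ℓ) = min m (p - ℓ) + 1 := by omega
      rw [hmin, Finset.sum_range_succ']
      simp [Matrix.one_apply]
    · -- ℓ = p
      have key : ∀ v' : Fin n,
          ∑ ℓ' : Fin (p+1), (layeredB n p A s t) (Sum.inl (v, ⟨ℓ, Nat.lt_succ_of_le hℓ⟩)) (Sum.inl (v', ℓ')) *
            (layeredB n p A s t ^ m) (Sum.inl (v', ℓ')) (Sum.inr true) = 0 := by
        intro v'
        apply Finset.sum_eq_zero
        intro ℓ' _
        have hlt := ℓ'.isLt
        have : (ℓ' : ℕ) ≠ ℓ + 1 := by omega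
        rw [layeredB_inl_inl, if_neg this, zero_mul]
      rw [Finset.sum_congr rfl (fun v' _ => key v')]
      simp only [layeredB_inl_t, layeredB_inl_f, htt, zero_mul, mul_one, zero_add]
      have hmin : min (m+1) (p + 1 - ℓ) = 1 := by omega
      rw [hmin]
      simp [Matrix.one_apply]

end Aux


/-- The number of walks of length exactly `p+2` from `s'` to `t'` in the layered
graph equals the number of walks of length at most `p` from `s` to `t` in the
original graph. -/
theorem layered_pow_eq_sum_pow (n p : ℕ) (A : Matrix (Fin n) (Fin n) ℕ)
    (hA : ∀ i j, A i j ≤ 1) (s t : Fin n) (hst : s ≠ t) :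
    (layeredB n p A s t ^ (p + 2)) (Sum.inr false) (Sum.inr true) =
      ∑ k ∈ Finset.Icc 1 p, (A ^ k) s t := by
  have h2 : p + 2 = (p + 1) + 1 := rfl
  rw [h2, pow_succ', Matrix.mul_apply, Fintype.sum_sum_type, Fintype.sum_bool,
    Fintype.sum_prod_type]
  have key : ∀ v : Fin n,
      ∑ ℓ : Fin (p+1), (layeredB n p A s t) (Sum.inr false) (Sum.inl (v, ℓ)) *
        (layeredB n p A s t ^ (p+1)) (Sum.inl (v, ℓ)) (Sum.inr true)
      = (if v = s then 1 else 0) *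
        (layeredB n p A s t ^ (p+1)) (Sum.inl (v, ⟨0, Nat.succ_pos p⟩)) (Sum.inr true) := by
    intro v
    rw [Finset.sum_eq_single (⟨0, Nat.succ_pos p⟩ : Fin (p+1))]
    · rw [layeredB_s_inl]
      congr 1
      simp [Fin.ext_iff]
    · intro ℓ _ hne
      have : ¬ (v = s ∧ ℓ = (0 : Fin (p+1))) := by
        rintro ⟨_, h⟩; exact hne (by simpa using h)
      rw [layeredB_s_inl, if_neg this, zero_mul]
    · intro h; exact absurd (Finset.mem_univ _) h
  rw [Finset.sum_congr rfl (fun v _ => key v)]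
  rw [Finset.sum_eq_single s]
  · rw [if_pos rfl, one_mul, layeredB_ss, layeredB_st, zero_mul, zero_mul,
      add_zero, add_zero, layeredB_pow_inl A s t (p+1) 0 (Nat.zero_le p) s]
    have : min (p+1) (p+1-0) = p + 1 := by omega
    rw [this, Finset.sum_range_succ']
    have h0 : (A ^ 0) s t = 0 := by
      simp [Matrix.one_apply, hst]
    rw [h0, add_zero]
    rw [← Finset.Ico_add_one_right_eq_Icc, Finset.sum_Ico_eq_sum_range]
    simp [add_comm]
  · intro v _ hv
    rw [if_neg hv, zero_mul]
  · intro h; exact absurd (Finset.mem_univ _) h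
end

section
/- For all natural numbers x, y, and i with y ≤ x: (x - y).testBit i = xor (x.testBit i) (xor (y.testBit i) (Borrow i x y)), where Borrow i x y is the proposition that there exists k < i with x.testBit k = false, y.testBit k = true, and for every j with k < j and j < i, x.testBit j = false or y.testBit j = true. That is, the borrow into bit position i when subtracting binary numbers occurs exactly when a borrow is generated at some lower position k and propagated through every intermediate position. -/
/-- `Borrow i x y` holds iff there is a borrow into bit position `i` when
subtracting the binary number `y` from `x`: a borrow is generated at some lower
position `k` and propagated through every intermediate position. -/
def Borrow (i x y : ℕ) : Prop :=
  ∃ k < i, x.testBit k = false ∧ y.testBit k = true ∧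
    ∀ j, k < j → j < i → (x.testBit j = false ∨ y.testBit j = true)

instance (i x y : ℕ) : Decidable (Borrow i x y) :=
  decidable_of_iff
    (∃ k < i, x.testBit k = false ∧ y.testBit k = true ∧
      ∀ j < i, k < j → (x.testBit j = false ∨ y.testBit j = true))
    ⟨fun ⟨k, hk, hx, hy, h⟩ => ⟨k, hk, hx, hy, fun j hkj hji => h j hji hkj⟩,
     fun ⟨k, hk, hx, hy, h⟩ => ⟨k, hk, hx, hy, fun j hji hkj => h j hkj hji⟩⟩

lemma borrow_succ (i x y : ℕ) :
    Borrow (i+1) x y ↔ (x.testBit i = false ∧ y.testBit i = true) ∨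
      (Borrow i x y ∧ (x.testBit i = false ∨ y.testBit i = true)) := by
  constructor
  · rintro ⟨k, hk, hx, hy, hprop⟩
    rcases eq_or_lt_of_le (Nat.lt_succ_iff.mp hk) with rfl | hk'
    · exact Or.inl ⟨hx, hy⟩
    · exact Or.inr ⟨⟨k, hk', hx, hy, fun j h1 h2 => hprop j h1 (h2.trans (Nat.lt_succ_self i))⟩,
        hprop i hk' (Nat.lt_succ_self i)⟩
  · rintro (⟨hx, hy⟩ | ⟨⟨k, hk, hx, hy, hprop⟩, hp⟩)
    · exact ⟨i, Nat.lt_succ_self i, hx, hy, fun j h1 h2 => absurd h1 (by omega)⟩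
    · refine ⟨k, by omega, hx, hy, fun j h1 h2 => ?_⟩
      rcases eq_or_lt_of_le (Nat.lt_succ_iff.mp h2) with rfl | h2'
      · exact hp
      · exact hprop j h1 h2'

lemma borrow_iff (i x y : ℕ) : Borrow i x y ↔ x % 2^i < y % 2^i := by
  induction i with
  | zero => simp [Borrow]; omega
  | succ i ih =>
    rw [borrow_succ, ih, Nat.testBit_eq_decide_div_mod_eq, Nat.testBit_eq_decide_div_mod_eq,
        pow_succ, Nat.mod_mul, Nat.mod_mul]
    have hx2 := Nat.mod_two_eq_zero_or_one (x / 2^i)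
    have hy2 := Nat.mod_two_eq_zero_or_one (y / 2^i)
    have hxm : x % 2^i < 2^i := Nat.mod_lt _ (Nat.two_pow_pos i)
    have hym : y % 2^i < 2^i := Nat.mod_lt _ (Nat.two_pow_pos i)
    rcases hx2 with h1|h1 <;> rcases hy2 with h2|h2 <;> simp [h1, h2] <;> omega

lemma sub_div_key (p a b u v : ℕ) (hp : 0 < p) (hu : u < p) (hv : v < p)
    (hle : p*b+v ≤ p*a+u) :
    (p*a+u - (p*b+v)) / p = a - b - (if u < v then 1 else 0) := by
  have hba : b ≤ a := by
    by_contra hba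
    push_neg at hba
    have h1 : p*(a+1) ≤ p*b := Nat.mul_le_mul_left _ (by omega)
    rw [Nat.mul_add, Nat.mul_one] at h1
    omega
  split
  · rename_i huv
    have hba' : b < a := by
      rcases Nat.eq_or_lt_of_le hba with rfl | h' ; · omega
      · exact h'
    have h1 : p*(a-b-1) + (p*b + p) = p*a := by
      rw [← Nat.mul_one p, Nat.mul_one, show p*b + p = p*(b+1) by ring, ← Nat.mul_add]
      congr 1; omega
    have heq : p*a+u - (p*b+v) = p*(a-b-1) + (p + u - v) := by omega
    rw [heq, Nat.mul_add_div hp, Nat.div_eq_of_lt (by omega)]; omega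
  · rename_i huv
    have h1 : p*(a-b) + p*b = p*a := by
      rw [← Nat.mul_add]; congr 1; omega
    have heq : p*a+u - (p*b+v) = p*(a-b) + (u - v) := by omega
    rw [heq, Nat.mul_add_div hp, Nat.div_eq_of_lt (by omega)]; omega

/-- Bitwise characterization of binary subtraction via the borrow relation. -/
theorem testBit_sub_eq_xor_borrow (x y i : ℕ) (h : y ≤ x) :
    (x - y).testBit i = xor (x.testBit i) (xor (y.testBit i) (decide (Borrow i x y))) := by
  have hb : decide (Borrow i x y) = decide (x % 2^i < y % 2^i) := by
    simp [decide_eq_decide, borrow_iff]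
  rw [hb, Nat.testBit_eq_decide_div_mod_eq, Nat.testBit_eq_decide_div_mod_eq, Nat.testBit_eq_decide_div_mod_eq]
  have hp : 0 < 2^i := Nat.two_pow_pos i
  have hu : x % 2^i < 2^i := Nat.mod_lt _ hp
  have hv : y % 2^i < 2^i := Nat.mod_lt _ hp
  have hx := Nat.div_add_mod x (2^i)
  have hy := Nat.div_add_mod y (2^i)
  have hab : y / 2^i ≤ x / 2^i := Nat.div_le_div_right h
  have hdiv := sub_div_key (2^i) (x/2^i) (y/2^i) (x%2^i) (y%2^i) hp hu hv
    (by rw [hx, hy]; exact h)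
  rw [hx, hy] at hdiv
  rcases Nat.lt_or_ge (x % 2^i) (y % 2^i) with hc | hc
  · have hba : y / 2^i < x / 2^i := by
      rcases Nat.lt_or_ge (y / 2^i) (x / 2^i) with h' | h'
      · exact h'
      · have heq : y / 2^i = x / 2^i := le_antisymm hab h'
        rw [heq] at hy
        omega
    rw [if_pos hc] at hdiv
    rcases Nat.mod_two_eq_zero_or_one (x / 2^i) with h1 | h1 <;>
      rcases Nat.mod_two_eq_zero_or_one (y / 2^i) with h2 | h2 <;>
      simp [h1, h2, hdiv, hc] <;> omega
  · rw [if_neg (by omega)] at hdiv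
    have hc' : ¬ (x % 2^i < y % 2^i) := by omega
    rcases Nat.mod_two_eq_zero_or_one (x / 2^i) with h1 | h1 <;>
      rcases Nat.mod_two_eq_zero_or_one (y / 2^i) with h2 | h2 <;>
      simp [h1, h2, hdiv, hc'] <;> omega
end
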